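/- arXiv:2107.04660 — 4 statements merged into one kernel-verified Lean document; each statement's English description precedes it below -/
import Mathlib

section
/- Let Σ be a finite alphabet of size σ ≥ 2, f : Σ → {0,…,σ−1} injective, and let S ≠ S' be two distinct strings over Σ of the same length n. Then for every natural number M ≥ 2, the number of distinct primes q with q > M and f(S) ≡ f(S') (mod q) is at most Nat.log M (σ^n), i.e., at most the floor of the base-M logarithm of σ^n. -/
/-!
Two distinct strings of length `n` have distinct values `a ≠ b`, both below `σ ^ n`, so
`D = |a - b|` satisfies `0 < D < σ ^ n`. Every prime `q > M` with `a ≡ b [MOD q]` divides `D`,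
so the product of `k` such primes divides `D` and `M ^ k ≤ D < σ ^ n`, whence
`k ≤ Nat.log M (σ ^ n)`.
-/

/-- The value realization (hash value) of a string `S` over an alphabet with
character values given by `f`, in base `σ`:
`f(S) = ∑_{i=1}^{n} σ^(i-1) · f(S[i])`. -/
def valueRealization {α : Type*} (σ : ℕ) (f : α → ℕ) : List α → ℕ
  | [] => 0
  | c :: rest => f c + σ * valueRealization σ f rest

section valueRealization

variable {α : Type*} {σ : ℕ} {f : α → ℕ}

theorem valueRealization_lt_pow (hfσ : ∀ a, f a < σ) :
    ∀ S : List α, valueRealization σ f S < σ ^ S.length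
  | [] => by simp [valueRealization]
  | c :: rest => by
    have hc := hfσ c
    have hrest : σ * (valueRealization σ f rest + 1) ≤ σ * σ ^ rest.length :=
      Nat.mul_le_mul_left σ (valueRealization_lt_pow hfσ rest)
    simp only [valueRealization, List.length_cons, pow_succ]
    nlinarith

-- The head character is recovered as the value modulo `σ`, the tail as the value divided by `σ`.
theorem valueRealization_injOn_length (hf : Function.Injective f) (hfσ : ∀ a, f a < σ) :
    ∀ {S S' : List α}, S.length = S'.length →
      valueRealization σ f S = valueRealization σ f S' → S = S'
  | [], [], _, _ => rfl
  | a :: s, b :: s', hlen, hval => by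
    simp only [valueRealization] at hval
    have hσ : 0 < σ := (Nat.zero_le _).trans_lt (hfσ a)
    have hhead : f a = f b := by
      simpa [Nat.add_mul_mod_self_left, Nat.mod_eq_of_lt (hfσ a), Nat.mod_eq_of_lt (hfσ b)]
        using congrArg (· % σ) hval
    have htail : valueRealization σ f s = valueRealization σ f s' :=
      Nat.eq_of_mul_eq_mul_left hσ (by omega)
    rw [hf hhead, valueRealization_injOn_length hf hfσ (by simpa using hlen) htail]

end valueRealization

theorem Nat.ncard_setOf_prime_gt_dvd_le_log {M D : ℕ} (hM : 2 ≤ M) (hD : D ≠ 0) :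
    {q : ℕ | q.Prime ∧ M < q ∧ q ∣ D}.ncard ≤ Nat.log M D := by
  set t := D.primeFactors.filter (M < ·)
  have hset : {q : ℕ | q.Prime ∧ M < q ∧ q ∣ D} = ↑t := by
    ext q
    simp only [Set.mem_ofPred_eq, Finset.coe_filter, mem_primeFactors, ne_eq, hD,
      not_false_eq_true, and_true, t]
    tauto
  have hprod : ∏ q ∈ t, q ∣ D :=
    (Finset.prod_dvd_prod_of_subset _ _ id (Finset.filter_subset _ _)).trans
      (Nat.prod_primeFactors_dvd D)
  have hpow : M ^ t.card ≤ ∏ q ∈ t, q :=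
    Finset.pow_card_le_prod _ _ _ fun q hq => (Finset.mem_filter.mp hq).2.le
  rw [hset, Set.ncard_coe_finset]
  exact Nat.le_log_of_pow_le hM (hpow.trans (Nat.le_of_dvd (Nat.pos_of_ne_zero hD) hprod))

theorem Nat.ncard_setOf_prime_gt_modEq_le_log {M N a b : ℕ} (hM : 2 ≤ M) (hab : a ≠ b)
    (ha : a < N) (hb : b < N) :
    {q : ℕ | q.Prime ∧ M < q ∧ a ≡ b [MOD q]}.ncard ≤ Nat.log M N := by
  set D := ((b : ℤ) - a).natAbs
  have hmodEq : ∀ q, a ≡ b [MOD q] ↔ q ∣ D := fun q => Nat.modEq_iff_dvd.trans Int.natCast_dvd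
  have hD : D ≠ 0 := by omega
  have hDN : D ≤ N := by omega
  simp only [hmodEq]
  exact (Nat.ncard_setOf_prime_gt_dvd_le_log hM hD).trans (Nat.log_mono_right hDN)

theorem card_primes_hash_collision_le_general
    {α : Type*} (σ : ℕ)
    (f : α → ℕ) (hf : Function.Injective f) (hfσ : ∀ a : α, f a < σ)
    (n : ℕ) (S S' : List α) (hS : S.length = n) (hS' : S'.length = n)
    (hne : S ≠ S') (M : ℕ) (hM : 2 ≤ M) :
    {q : ℕ | q.Prime ∧ M < q ∧
        valueRealization σ f S ≡ valueRealization σ f S' [MOD q]}.ncard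
      ≤ Nat.log M (σ ^ n) := by
  have hval_ne : valueRealization σ f S ≠ valueRealization σ f S' :=
    fun h => hne (valueRealization_injOn_length hf hfσ (hS.trans hS'.symm) h)
  subst hS
  exact Nat.ncard_setOf_prime_gt_modEq_le_log hM hval_ne (valueRealization_lt_pow hfσ S)
    (hS' ▸ valueRealization_lt_pow hfσ S')

/-- For two distinct strings `S ≠ S'` of the same length `n`, the number of
distinct primes `q > M` with `f(S) ≡ f(S') (mod q)` is at most
`Nat.log M (σ^n)`. -/
theorem card_primes_hash_collision_le
    {α : Type*} [Fintype α] (σ : ℕ) (hσ : 2 ≤ σ) (hcard : Fintype.card α = σ)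
    (f : α → ℕ) (hf : Function.Injective f) (hfσ : ∀ a : α, f a < σ)
    (n : ℕ) (S S' : List α) (hS : S.length = n) (hS' : S'.length = n)
    (hne : S ≠ S') (M : ℕ) (hM : 2 ≤ M) :
    {q : ℕ | q.Prime ∧ M < q ∧
        valueRealization σ f S ≡ valueRealization σ f S' [MOD q]}.ncard
      ≤ Nat.log M (σ ^ n) :=
  card_primes_hash_collision_le_general σ f hf hfσ n S S' hS hS' hne M hM
end

section
/- Collision probability of the randomized hash: let Σ be a finite alphabet of size σ ≥ 2, f : Σ → {0,…,σ−1} injective, S ≠ S' two distinct strings over Σ of the same length n, and M ≥ 2 a natural number. Let Q be the (nonempty, by Bertrand's postulate) finite set of primes q with M < q ≤ 2M. If q is drawn uniformly at random from Q, then the probability that f(S) ≡ f(S') (mod q) is at most Nat.log M (σ^n) / |Q|. -/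
/-- The set of primes `q` with `M < q ≤ 2M`. -/
def primesUpToDouble (M : ℕ) : Finset ℕ := (Finset.Ioc M (2 * M)).filter Nat.Prime

/-! Distinct strings of length `n` have distinct values below `σ ^ n`, so their difference is a
nonzero number `d < σ ^ n`. Every colliding prime divides `d` and exceeds `M`, so if there are `k`
of them then `M ^ k ≤ d < σ ^ n`, i.e. `k ≤ log_M (σ ^ n)`. -/

section ValueRealization

variable {α : Type*} {σ : ℕ} {f : α → ℕ}

theorem valueRealization_lt_pow_length (hfσ : ∀ a, f a < σ) (S : List α) :
    valueRealization σ f S < σ ^ S.length := by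
  induction S with
  | nil => simp [valueRealization]
  | cons c rest ih =>
    calc f c + σ * valueRealization σ f rest < σ * (valueRealization σ f rest + 1) := by
          linarith [hfσ c]
      _ ≤ σ * σ ^ rest.length := Nat.mul_le_mul_left σ ih
      _ = σ ^ (c :: rest).length := by rw [List.length_cons, pow_succ']

theorem valueRealization_cons_mod (hfσ : ∀ a, f a < σ) (c : α) (S : List α) :
    valueRealization σ f (c :: S) % σ = f c := by
  rw [valueRealization, Nat.add_mul_mod_self_left, Nat.mod_eq_of_lt (hfσ c)]

theorem valueRealization_cons_div (hfσ : ∀ a, f a < σ) (c : α) (S : List α) :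
    valueRealization σ f (c :: S) / σ = valueRealization σ f S := by
  rw [valueRealization, Nat.add_mul_div_left _ _ (by linarith [hfσ c]),
    Nat.div_eq_of_lt (hfσ c), zero_add]

theorem eq_of_valueRealization_eq (hf : Function.Injective f) (hfσ : ∀ a, f a < σ)
    {S S' : List α} (hlen : S.length = S'.length)
    (h : valueRealization σ f S = valueRealization σ f S') : S = S' := by
  induction S generalizing S' with
  | nil => exact (List.length_eq_zero_iff.mp hlen.symm).symm
  | cons c rest ih =>
    obtain _ | ⟨c', rest'⟩ := S'
    · simp at hlen
    · have hc : c = c' := hf <| by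
        rw [← valueRealization_cons_mod hfσ c rest, h, valueRealization_cons_mod hfσ]
      have hrest : valueRealization σ f rest = valueRealization σ f rest' := by
        rw [← valueRealization_cons_div hfσ c rest, h, valueRealization_cons_div hfσ]
      rw [hc, ih (Nat.succ.inj hlen) hrest]

end ValueRealization

theorem Finset.card_le_log_of_forall_prime_dvd {T : Finset ℕ} {M d : ℕ} (hM : 1 < M) (hd : d ≠ 0)
    (hT : ∀ q ∈ T, q.Prime ∧ M ≤ q ∧ q ∣ d) : T.card ≤ Nat.log M d := by
  refine Nat.le_log_of_pow_le hM ?_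
  calc M ^ T.card ≤ ∏ q ∈ T, q := T.pow_card_le_prod _ _ fun q hq => (hT q hq).2.1
    _ ≤ d := Nat.le_of_dvd (Nat.pos_of_ne_zero hd) <|
        T.prod_primes_dvd d (fun q hq => (hT q hq).1.prime) fun q hq => (hT q hq).2.2

theorem Finset.card_le_log_of_forall_prime_modEq {T : Finset ℕ} {M N a b : ℕ} (hM : 1 < M)
    (hab : a ≠ b) (ha : a < N) (hb : b < N) (hT : ∀ q ∈ T, q.Prime ∧ M ≤ q ∧ a ≡ b [MOD q]) :
    T.card ≤ Nat.log M N := by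
  have hcard := T.card_le_log_of_forall_prime_dvd hM (d := ((b : ℤ) - a).natAbs) (by omega)
    fun q hq => ⟨(hT q hq).1, (hT q hq).2.1, Int.natCast_dvd.mp (hT q hq).2.2.dvd⟩
  exact hcard.trans (Nat.log_mono_right (by omega))

theorem primesUpToDouble_nonempty {M : ℕ} (hM : M ≠ 0) : (primesUpToDouble M).Nonempty := by
  obtain ⟨p, hp, hMp, hp2M⟩ := Nat.exists_prime_lt_and_le_two_mul M hM
  exact ⟨p, Finset.mem_filter.mpr ⟨Finset.mem_Ioc.mpr ⟨hMp, hp2M⟩, hp⟩⟩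

theorem hash_collision_probability_le_general
    {α : Type*} (σ : ℕ)
    (f : α → ℕ) (hf : Function.Injective f) (hfσ : ∀ a : α, f a < σ)
    (n : ℕ) (S S' : List α) (hS : S.length = n) (hS' : S'.length = n)
    (hne : S ≠ S') (M : ℕ) (hM : 2 ≤ M) :
    (primesUpToDouble M).Nonempty ∧
    (((primesUpToDouble M).filter
        (fun q => valueRealization σ f S % q = valueRealization σ f S' % q)).card : ℝ)
        / (primesUpToDouble M).card
      ≤ (Nat.log M (σ ^ n) : ℝ) / (primesUpToDouble M).card := by
  refine ⟨primesUpToDouble_nonempty (by omega), ?_⟩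
  have hcollisions : ((primesUpToDouble M).filter
      (fun q => valueRealization σ f S % q = valueRealization σ f S' % q)).card
      ≤ Nat.log M (σ ^ n) := by
    refine Finset.card_le_log_of_forall_prime_modEq (by omega)
      (fun h => hne (eq_of_valueRealization_eq hf hfσ (hS.trans hS'.symm) h))
      (hS ▸ valueRealization_lt_pow_length hfσ S) (hS' ▸ valueRealization_lt_pow_length hfσ S')
      fun q hq => ?_
    simp only [primesUpToDouble, Finset.mem_filter, Finset.mem_Ioc] at hq
    exact ⟨hq.1.2, hq.1.1.1.le, hq.2⟩
  gcongr

/-- Collision probability of the randomized hash: for distinct strings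
`S ≠ S'` of the same length `n`, the set `Q` of primes `q` with `M < q ≤ 2M`
is nonempty (Bertrand's postulate), and the probability over a uniformly
random `q ∈ Q` that `f(S) ≡ f(S') (mod q)` is at most
`Nat.log M (σ^n) / |Q|`. -/
theorem hash_collision_probability_le
    {α : Type*} [Fintype α] (σ : ℕ) (hσ : 2 ≤ σ) (hcard : Fintype.card α = σ)
    (f : α → ℕ) (hf : Function.Injective f) (hfσ : ∀ a : α, f a < σ)
    (n : ℕ) (S S' : List α) (hS : S.length = n) (hS' : S'.length = n)
    (hne : S ≠ S') (M : ℕ) (hM : 2 ≤ M) :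
    (primesUpToDouble M).Nonempty ∧
    (((primesUpToDouble M).filter
        (fun q => valueRealization σ f S % q = valueRealization σ f S' % q)).card : ℝ)
        / (primesUpToDouble M).card
      ≤ (Nat.log M (σ ^ n) : ℝ) / (primesUpToDouble M).card :=
  hash_collision_probability_le_general σ f hf hfσ n S S' hS hS' hne M hM
end

section
/- Hard instance for wildcard pattern matching: fix k ≥ 1 and work over the alphabet {0,1} with wildcard symbol ?. Let T be the text 1^k 0 1^k 0 (k ones, a zero, k ones, a zero). For a tuple a = (a_1,…,a_k) with each a_j ∈ {1, ?} and an integer 1 ≤ i ≤ k, let P_{a,i} be the pattern a_1 a_2 … a_k 1^i 0. Then P_{a,i} wildcard-matches T at some position if and only if a_i = ?. -/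
/-!
The final `0` of `P_{a,i}` must sit on one of the two zeros of `T`; since the pattern has length
`k + i + 1 > k + 1`, only the second zero is reachable, which pins the position to `k + 1 - i`.
There the block `1^i 0` matches, and the block `a` is aligned so that `a_i` faces the first zero
of `T` while every other `a_j` faces a `1`. As `a_j ∈ {1, ?}`, this succeeds iff `a_i = ?`.
-/

/-- A pattern `P` over `Σ ∪ {?}` (wildcard `?` modeled as `none`)
wildcard-matches the text `T` at 0-indexed position `p`: `p + |P| ≤ |T|` and
every non-wildcard pattern character equals the corresponding text character. -/
def wildcardMatchAt {α : Type*} (T : List α) (P : List (Option α)) (p : ℕ) : Prop :=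
  p + P.length ≤ T.length ∧
    ∀ j < P.length, ∀ a : α, P[j]? = some (some a) → T[p + j]? = some a

open List

section WildcardMatch

variable {α : Type*} {T : List α} {P Q : List (Option α)} {p : ℕ}

theorem wildcardMatchAt_append :
    wildcardMatchAt T (P ++ Q) p ↔
      wildcardMatchAt T P p ∧ wildcardMatchAt T Q (p + P.length) := by
  simp only [wildcardMatchAt, length_append]
  constructor
  · rintro ⟨hlen, hmatch⟩
    refine ⟨⟨by omega, fun j hj c hc => hmatch j (by omega) c ?_⟩,
      ⟨by omega, fun j hj c hc => ?_⟩⟩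
    · rwa [getElem?_append_left hj]
    · rw [Nat.add_assoc]
      exact hmatch (P.length + j) (by omega) c (by rwa [getElem?_append_right (by omega),
        Nat.add_sub_cancel_left])
  · rintro ⟨⟨-, hP⟩, hlen, hQ⟩
    refine ⟨by omega, fun j hj c hc => ?_⟩
    rcases Nat.lt_or_ge j P.length with hjP | hjP
    · exact hP j hjP c (by rwa [getElem?_append_left hjP] at hc)
    · obtain ⟨j, rfl⟩ := Nat.exists_eq_add_of_le hjP
      rw [← Nat.add_assoc]
      exact hQ j (by omega) c (by rwa [getElem?_append_right hjP, Nat.add_sub_cancel_left] at hc)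

theorem wildcardMatchAt_replicate_some {c : α} {n : ℕ} :
    wildcardMatchAt T (replicate n (some c)) p ↔
      p + n ≤ T.length ∧ ∀ j < n, T[p + j]? = some c := by
  simp only [wildcardMatchAt, length_replicate, getElem?_replicate, Option.ite_none_right_eq_some,
    Option.some.injEq]
  exact and_congr_right fun _ =>
    ⟨fun h j hj => h j hj c ⟨hj, rfl⟩, fun h j hj _ ⟨_, hc⟩ => hc ▸ h j hj⟩

theorem wildcardMatchAt_singleton_some {c : α} :
    wildcardMatchAt T [some c] p ↔ T[p]? = some c := by
  rw [← replicate_one, wildcardMatchAt_replicate_some]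
  refine ⟨fun h => h.2 0 one_pos, fun h => ⟨?_, fun j hj => ?_⟩⟩
  · exact (List.getElem?_eq_some_iff.1 h).1
  · rwa [Nat.lt_one_iff.1 hj]

end WildcardMatch

section HardText

def hardText (k : ℕ) : List Bool :=
  replicate k true ++ [false] ++ replicate k true ++ [false]

variable {k j : ℕ}

theorem length_hardText : (hardText k).length = 2 * k + 2 := by
  simp only [hardText, length_append, length_replicate, length_singleton]
  omega

theorem getElem?_hardText_eq_false : (hardText k)[j]? = some false ↔ j = k ∨ j = 2 * k + 1 := by
  simp only [hardText, getElem?_append, getElem?_replicate, length_append, length_replicate,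
    length_singleton, getElem?_singleton]
  split_ifs <;> simp <;> omega

theorem getElem?_hardText_eq_true : (hardText k)[j]? = some true ↔ j < 2 * k + 1 ∧ j ≠ k := by
  simp only [hardText, getElem?_append, getElem?_replicate, length_append, length_replicate,
    length_singleton, getElem?_singleton]
  split_ifs <;> simp <;> omega

theorem wildcardMatchAt_hardText_iff {a : List (Option Bool)} {i : ℕ} (ha : a.length = k)
    (ha' : ∀ x ∈ a, x = some true ∨ x = none) (hi1 : 1 ≤ i) (hik : i ≤ k) :
    wildcardMatchAt (hardText k) a (k + 1 - i) ↔ a[i - 1]? = some none := by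
  constructor
  · rintro ⟨-, hmatch⟩
    obtain ⟨x, hx⟩ : ∃ x, a[i - 1]? = some x := ⟨a[i - 1], getElem?_eq_getElem (by omega)⟩
    rcases ha' x (mem_of_getElem? hx) with rfl | rfl
    · have hone := hmatch (i - 1) (by omega) true hx
      rw [getElem?_hardText_eq_true] at hone
      omega
    · exact hx
  · refine fun hnone => ⟨by rw [length_hardText]; omega, fun j hj c hc => ?_⟩
    obtain rfl : c = true := by simpa using ha' _ (mem_of_getElem? hc)
    have hji : j ≠ i - 1 := by rintro rfl; simp [hnone] at hc
    exact getElem?_hardText_eq_true.2 (by omega)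

end HardText

theorem wildcard_hard_instance_general (k : ℕ)
    (a : List (Option Bool)) (ha : a.length = k)
    (ha' : ∀ x ∈ a, x = some true ∨ x = none)
    (i : ℕ) (hi1 : 1 ≤ i) (hik : i ≤ k) :
    (∃ p : ℕ, wildcardMatchAt
        (List.replicate k true ++ [false] ++ List.replicate k true ++ [false])
        (a ++ List.replicate i (some true) ++ [some false]) p)
      ↔ a[i - 1]? = some none := by
  change (∃ p, wildcardMatchAt (hardText k) _ p) ↔ _
  simp only [wildcardMatchAt_append, wildcardMatchAt_singleton_some, length_append, ha,
    length_replicate, getElem?_hardText_eq_false]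
  constructor
  · rintro ⟨p, ⟨hmatch, -⟩, hzero⟩
    obtain rfl : p = k + 1 - i := by omega
    exact (wildcardMatchAt_hardText_iff ha ha' hi1 hik).1 hmatch
  · intro hnone
    refine ⟨k + 1 - i, ⟨(wildcardMatchAt_hardText_iff ha ha' hi1 hik).2 hnone, ?_⟩, by omega⟩
    refine wildcardMatchAt_replicate_some.2 ⟨by rw [length_hardText]; omega, fun j hj => ?_⟩
    exact getElem?_hardText_eq_true.2 (by omega)

/-- Hard instance for wildcard pattern matching over the alphabet `{0,1}`
(modeled as `Bool`, with `true` for `1` and `false` for `0`): with text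
`T = 1^k 0 1^k 0` and pattern `P_{a,i} = a_1 … a_k 1^i 0` where each
`a_j ∈ {1, ?}` and `1 ≤ i ≤ k`, the pattern `P_{a,i}` wildcard-matches `T`
at some position if and only if `a_i = ?`. -/
theorem wildcard_hard_instance (k : ℕ) (hk : 1 ≤ k)
    (a : List (Option Bool)) (ha : a.length = k)
    (ha' : ∀ x ∈ a, x = some true ∨ x = none)
    (i : ℕ) (hi1 : 1 ≤ i) (hik : i ≤ k) :
    (∃ p : ℕ, wildcardMatchAt
        (List.replicate k true ++ [false] ++ List.replicate k true ++ [false])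
        (a ++ List.replicate i (some true) ++ [some false]) p)
      ↔ a[i - 1]? = some none :=
  wildcard_hard_instance_general k a ha ha' i hi1 hik
end

section
/- Fooling-set property for wildcard pattern matching: fix k ≥ 1, let T be the text 1^k 0 1^k 0 over {0,1}, and for a ∈ {1, ?}^k and 1 ≤ i ≤ k let P_{a,i} be the pattern a_1 … a_k 1^i 0. For any two distinct tuples a ≠ a' in {1, ?}^k there exists an index i with 1 ≤ i ≤ k such that exactly one of the two patterns P_{a,i} and P_{a',i} wildcard-matches T at some position. Hence the map sending a ∈ {1,?}^k to the function i ↦ (P_{a,i} wildcard-matches T at some position) is injective, giving 2^k distinct such functions. -/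
abbrev foolingText (k : ℕ) : List Bool :=
  List.replicate k true ++ [false] ++ List.replicate k true ++ [false]

abbrev foolingPattern (a : List (Option Bool)) (i : ℕ) : List (Option Bool) :=
  a ++ List.replicate i (some true) ++ [some false]

@[simp]
theorem foolingText_length (k : ℕ) : (foolingText k).length = 2 * k + 2 := by
  simp only [foolingText, List.length_append, List.length_replicate, List.length_singleton]; omega

@[simp]
theorem foolingPattern_length (a : List (Option Bool)) (i : ℕ) :
    (foolingPattern a i).length = a.length + i + 1 := by
  simp only [foolingPattern, List.length_append, List.length_replicate, List.length_singleton]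

theorem foolingText_getElem? {k m : ℕ} (hm : m < 2 * k + 2) :
    (foolingText k)[m]? = some (decide (m ≠ k ∧ m ≠ 2 * k + 1)) := by
  simp only [foolingText, List.getElem?_append, List.getElem?_replicate, List.length_append,
    List.length_replicate, List.length_singleton, List.getElem?_singleton]
  split_ifs <;> (try simp) <;> omega

theorem foolingPattern_getElem?_of_lt {a : List (Option Bool)} {i j : ℕ} (hj : j < a.length) :
    (foolingPattern a i)[j]? = a[j]? := by
  rw [List.getElem?_append_left (by simp; omega), List.getElem?_append_left hj]

theorem foolingPattern_getElem?_of_le_of_lt {a : List (Option Bool)} {i j : ℕ}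
    (hj₁ : a.length ≤ j) (hj₂ : j < a.length + i) :
    (foolingPattern a i)[j]? = some (some true) := by
  rw [List.getElem?_append_left (by simpa using hj₂), List.getElem?_append_right hj₁,
    List.getElem?_replicate_of_lt (by omega)]

theorem foolingPattern_getElem?_length_add (a : List (Option Bool)) (i : ℕ) :
    (foolingPattern a i)[a.length + i]? = some (some false) := by
  simp

section

variable {k i p : ℕ} {a : List (Option Bool)}

theorem add_eq_of_wildcardMatchAt_foolingPattern (ha : a.length = k)
    (h : wildcardMatchAt (foolingText k) (foolingPattern a (i + 1)) p) : p + i = k := by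
  subst ha
  obtain ⟨hlen, hchar⟩ := h
  simp only [foolingText_length, foolingPattern_length] at hlen
  have hlast := hchar (a.length + (i + 1)) (by simp) false
    (foolingPattern_getElem?_length_add a (i + 1))
  rw [foolingText_getElem? (by omega)] at hlast
  simp at hlast
  omega

theorem getElem?_eq_some_none_of_wildcardMatchAt (hi : i < k) (ha : a.length = k)
    (hae : ∀ x ∈ a, x = some true ∨ x = none)
    (h : wildcardMatchAt (foolingText k) (foolingPattern a (i + 1)) p) : a[i]? = some none := by
  have hp := add_eq_of_wildcardMatchAt_foolingPattern ha h
  subst ha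
  rw [List.getElem?_eq_getElem hi]
  refine congrArg some ((hae _ (List.getElem_mem hi)).resolve_left fun htrue => ?_)
  have hzero := h.2 i (by simp; omega) true
    (by rw [foolingPattern_getElem?_of_lt hi, List.getElem?_eq_getElem hi, htrue])
  rw [foolingText_getElem? (by omega)] at hzero
  simp at hzero
  omega

theorem wildcardMatchAt_foolingPattern (hi : i < k) (ha : a.length = k)
    (hae : ∀ x ∈ a, x = some true ∨ x = none) (h : a[i]? = some none) :
    wildcardMatchAt (foolingText k) (foolingPattern a (i + 1)) (k - i) := by
  subst ha
  refine ⟨by simp; omega, fun j hj b hb => ?_⟩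
  rw [foolingPattern_length] at hj
  rw [foolingText_getElem? (by omega)]
  rcases lt_or_ge j a.length with hja | hja
  · rw [foolingPattern_getElem?_of_lt hja, List.getElem?_eq_getElem hja] at hb
    rcases hae _ (List.getElem_mem hja) with htrue | hnone
    · have hji : j ≠ i := by rintro rfl; simp [List.getElem?_eq_getElem hja, htrue] at h
      rw [htrue] at hb
      cases hb
      simp
      omega
    · simp [hnone] at hb
  rcases lt_or_ge j (a.length + (i + 1)) with hj' | hj'
  · rw [foolingPattern_getElem?_of_le_of_lt hja hj'] at hb
    cases hb
    simp
    omega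
  · obtain rfl : j = a.length + (i + 1) := by omega
    rw [foolingPattern_getElem?_length_add] at hb
    cases hb
    simp
    omega

theorem exists_wildcardMatchAt_foolingPattern_iff (hi : i < k) (ha : a.length = k)
    (hae : ∀ x ∈ a, x = some true ∨ x = none) :
    (∃ p, wildcardMatchAt (foolingText k) (foolingPattern a (i + 1)) p) ↔ a[i]? = some none :=
  ⟨fun ⟨_, h⟩ => getElem?_eq_some_none_of_wildcardMatchAt hi ha hae h,
    fun h => ⟨_, wildcardMatchAt_foolingPattern hi ha hae h⟩⟩

end

theorem wildcard_fooling_set_general (k : ℕ)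
    (a a' : List (Option Bool)) (ha : a.length = k) (ha'len : a'.length = k)
    (hae : ∀ x ∈ a, x = some true ∨ x = none)
    (ha'e : ∀ x ∈ a', x = some true ∨ x = none)
    (hne : a ≠ a') :
    ∃ i : ℕ, 1 ≤ i ∧ i ≤ k ∧
      Xor'
        (∃ p : ℕ, wildcardMatchAt
          (List.replicate k true ++ [false] ++ List.replicate k true ++ [false])
          (a ++ List.replicate i (some true) ++ [some false]) p)
        (∃ p : ℕ, wildcardMatchAt
          (List.replicate k true ++ [false] ++ List.replicate k true ++ [false])
          (a' ++ List.replicate i (some true) ++ [some false]) p) := by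
  obtain ⟨i, hdiff⟩ : ∃ i, a[i]? ≠ a'[i]? := not_forall.mp (mt List.ext_getElem? hne)
  have hi : i < k := by
    by_contra! hki
    exact hdiff (by rw [List.getElem?_eq_none (by omega), List.getElem?_eq_none (by omega)])
  refine ⟨i + 1, by omega, hi, ?_⟩
  rw [exists_wildcardMatchAt_foolingPattern_iff hi ha hae,
    exists_wildcardMatchAt_foolingPattern_iff hi ha'len ha'e]
  obtain ⟨x, hx⟩ : ∃ x, a[i]? = some x := ⟨_, List.getElem?_eq_getElem (by omega)⟩
  obtain ⟨y, hy⟩ : ∃ y, a'[i]? = some y := ⟨_, List.getElem?_eq_getElem (by omega)⟩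
  refine (xor_iff_not_iff _ _).mpr ?_
  rw [hx, hy] at hdiff ⊢
  rcases hae x (List.mem_of_getElem? hx) with rfl | rfl <;>
    rcases ha'e y (List.mem_of_getElem? hy) with rfl | rfl <;> simp_all

/-- Fooling-set property for wildcard pattern matching, over the alphabet
`{0,1}` (modeled as `Bool`, `true` for `1`, `false` for `0`): with text
`T = 1^k 0 1^k 0` and patterns `P_{a,i} = a_1 … a_k 1^i 0`, for any two
distinct tuples `a ≠ a'` in `{1, ?}^k` there is an index `1 ≤ i ≤ k` such
that exactly one of `P_{a,i}` and `P_{a',i}` wildcard-matches `T` at some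
position; hence the map `a ↦ (i ↦ (P_{a,i} matches T))` is injective, giving
`2^k` distinct such functions. -/
theorem wildcard_fooling_set (k : ℕ) (hk : 1 ≤ k)
    (a a' : List (Option Bool)) (ha : a.length = k) (ha'len : a'.length = k)
    (hae : ∀ x ∈ a, x = some true ∨ x = none)
    (ha'e : ∀ x ∈ a', x = some true ∨ x = none)
    (hne : a ≠ a') :
    ∃ i : ℕ, 1 ≤ i ∧ i ≤ k ∧
      Xor'
        (∃ p : ℕ, wildcardMatchAt
          (List.replicate k true ++ [false] ++ List.replicate k true ++ [false])
          (a ++ List.replicate i (some true) ++ [some false]) p)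
        (∃ p : ℕ, wildcardMatchAt
          (List.replicate k true ++ [false] ++ List.replicate k true ++ [false])
          (a' ++ List.replicate i (some true) ++ [some false]) p) :=
  wildcard_fooling_set_general k a a' ha ha'len hae ha'e hne
end
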